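/- arXiv:1003.3218 — 2 statements merged into one kernel-verified Lean document; each statement's English description precedes it below -/
import Mathlib

section
/- Let c be a step speed function, q ∈ ℝ, and fix z, w > 0. Then there exists a constant C = C(z, w, c, q) < ∞ such that for all δ ∈ (0,1]: (i) for all a ∈ [0,z], Γ^q((a,0),(z,δ)) − Γ^q((a,0),(z,0)) ≤ C√δ; and (ii) for all b ∈ [0,w], Γ^q((−b,b),(−w,w+δ)) − Γ^q((−b,b),(−w,w)) ≤ C√δ. -/
open MeasureTheory ProbabilityTheory Real Set Filter Topology

noncomputable section

/-! ### The macroscopic wedge, paths and the variational constant `Γ^q` -/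

/-- The wedge `𝒲 = {(x,y) : y ≥ 0, x ≥ -y}`. -/
def Wedge : Set (ℝ × ℝ) := {p | 0 ≤ p.2 ∧ -p.2 ≤ p.1}

/-- The homogeneous last-passage constant `γ(x,y) = (√(x+y) + √y)²`. -/
def gam (p : ℝ × ℝ) : ℝ := (Real.sqrt (p.1 + p.2) + Real.sqrt p.2) ^ 2

/-- `f` is a continuous, piecewise `C¹` path on `[0,1]` from `p₀` to `p₁` whose derivative
(where defined) lies in the wedge. -/
def IsWedgePath (p₀ p₁ : ℝ × ℝ) (f : ℝ → ℝ × ℝ) : Prop :=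
  ContinuousOn f (Icc 0 1) ∧ f 0 = p₀ ∧ f 1 = p₁ ∧
    ∃ (k : ℕ) (s : Fin (k + 1) → ℝ), StrictMono s ∧ s 0 = 0 ∧ s (Fin.last k) = 1 ∧
      ∀ i : Fin k,
        ContDiffOn ℝ 1 f (Icc (s i.castSucc) (s i.succ)) ∧
        ∀ t ∈ Ioo (s i.castSucc) (s i.succ), deriv f t ∈ Wedge

/-- The functional `∫₀¹ γ(x'(s)) / c(x₁(s) - q) ds` of a macroscopic path. -/
def wPathIntegral (c : ℝ → ℝ) (q : ℝ) (f : ℝ → ℝ × ℝ) : ℝ :=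
  ∫ s in (0:ℝ)..1, gam (deriv f s) / c ((f s).1 - q)

/-- `Γ^q` with a general starting point. -/
def GammaFrom (c : ℝ → ℝ) (q : ℝ) (p₀ p₁ : ℝ × ℝ) : ℝ :=
  sSup { I | ∃ f, IsWedgePath p₀ p₁ f ∧ I = wPathIntegral c q f }

/-- `Γ^q(x,y)`: supremum of the path functional over paths from the origin to `(x,y)`. -/
def GammaQ (c : ℝ → ℝ) (q : ℝ) (p : ℝ × ℝ) : ℝ := GammaFrom c q (0, 0) p

/-! ### Speed functions -/

/-- A speed function: positive, lower semicontinuous, equal at every point to the minimum of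
its one-sided limits (which exist), with finitely many discontinuities in every compact set. -/
def IsSpeedFunction (c : ℝ → ℝ) : Prop :=
  (∀ x, 0 < c x) ∧ LowerSemicontinuous c ∧
    (∀ x : ℝ, ∃ l r : ℝ,
      Tendsto c (nhdsWithin x (Iio x)) (𝓝 l) ∧
      Tendsto c (nhdsWithin x (Ioi x)) (𝓝 r) ∧ c x = min l r) ∧
    ∀ K : Set ℝ, IsCompact K → {x ∈ K | ¬ ContinuousAt c x}.Finite

/-- Data of a step speed function: finitely many cut points `a₁ < … < a_N` and positive
values `r₀, …, r_N` on the successive open intervals. -/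
structure StepSpeedData where
  N : ℕ
  a : Fin N → ℝ
  ha : StrictMono a
  r : Fin (N + 1) → ℝ
  hr : ∀ m, 0 < r m

/-- `x` lies in the `i`-th open interval determined by the cut points of `d`. -/
def StepSpeedData.InOpenPiece (d : StepSpeedData) (i : Fin (d.N + 1)) (x : ℝ) : Prop :=
  (∀ j : Fin d.N, (j : ℕ) < (i : ℕ) → d.a j < x) ∧
  (∀ j : Fin d.N, (i : ℕ) ≤ (j : ℕ) → x < d.a j)

/-- `c` is the lower semicontinuous step function determined by the data `d`:
it equals `r i` on the `i`-th open interval and `min` of the adjacent values at cut points. -/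
def StepSpeedData.IsStepOf (d : StepSpeedData) (c : ℝ → ℝ) : Prop :=
  (∀ (i : Fin (d.N + 1)) (x : ℝ), d.InOpenPiece i x → c x = d.r i) ∧
  (∀ j : Fin d.N, c (d.a j) = min (d.r j.castSucc) (d.r j.succ))

/-- `c` is a (lower semicontinuous, positive) step speed function. -/
def IsStepSpeed (c : ℝ → ℝ) : Prop := ∃ d : StepSpeedData, d.IsStepOf c

/-! ### The lattice wedge and last-passage times -/

/-- The lattice wedge `ℒ = {(i,j) : j ≥ 1, i ≥ -j+1}`. -/
def LatticeWedge : Set (ℤ × ℤ) := {p | 1 ≤ p.2 ∧ 1 - p.2 ≤ p.1}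

/-- An admissible lattice path from `(0,1)` to `target`, with steps `(1,0)`, `(0,1)`, `(-1,1)`. -/
def IsLatticePath (target : ℤ × ℤ) (pa : List (ℤ × ℤ)) : Prop :=
  pa.head? = some (0, 1) ∧ pa.getLast? = some target ∧
    List.Chain' (fun u v =>
      v = (u.1 + 1, u.2) ∨ v = (u.1, u.2 + 1) ∨ v = (u.1 - 1, u.2 + 1)) pa

/-- Total weight collected by a lattice path in the environment `env`. -/
def pathWeight (env : ℤ × ℤ → ℝ) (pa : List (ℤ × ℤ)) : ℝ := (pa.map env).sum

/-- The wedge last passage time to `uv` in the environment `env` (zero off the lattice wedge). -/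
def wedgeLPT (env : ℤ × ℤ → ℝ) : ℤ × ℤ → ℝ :=
  LatticeWedge.indicator fun uv =>
    sSup { s | ∃ pa : List (ℤ × ℤ), IsLatticePath uv pa ∧ s = pathWeight env pa }

/-- The environment of the `n`-th process with shift `ℓ`, speed function `c` and
exponential weights `τ`: site `(i,j)` carries `c((i-ℓ)/n)⁻¹ τ_{i,j}`. -/
def wedgeEnv (c : ℝ → ℝ) (n : ℕ) (ℓ : ℤ) (τ : ℤ × ℤ → ℝ) : ℤ × ℤ → ℝ :=
  fun p => (c (((p.1 : ℝ) - (ℓ : ℝ)) / (n : ℝ)))⁻¹ * τ p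

/-!
Write `u x = (c (x - q))⁻¹ ∈ [0, 1/m]` (for `c ≥ m > 0`) and `U` for a primitive of `u`. On the
wedge `γ v = v₁ + 2 v₂ + 2 √((v₁ + v₂) v₂)`, and AM-GM with a free parameter `t > 0` bounds
`γ v · u x` by `± v₁ u x + ℓ v` for a linear form `ℓ` with coefficients `O((1 + t + 1/t) / m)`.
Along an admissible path the term `x₁' u(x₁)` integrates exactly to the increment of `U` (a change
of variables that only needs `u` bounded with countably many discontinuities), so
`Γ^q(p₀, p₁) ≤ ± (U p₁.1 - U p₀.1) + ℓ (p₁ - p₀)`. On the horizontal and antidiagonal boundary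
rays `γ v = ± v₁`, so the straight segment attains `± (U p₁.1 - U p₀.1)`. Each difference in the
theorem is therefore at most `ℓ (z - a, δ)`, resp. `ℓ (b - w, w - b + δ)`, which is `O(√δ)` for
`t = √δ`.
-/

namespace StepSpeedData

variable (d : StepSpeedData)

lemma exists_inOpenPiece {x : ℝ} (hx : x ∉ range d.a) : ∃ i, d.InOpenPiece i x := by
  classical
  have hN : ∃ n, ∀ j : Fin d.N, n ≤ (j : ℕ) → x < d.a j :=
    ⟨d.N, fun j hj => absurd j.isLt (not_lt.2 hj)⟩
  refine ⟨⟨Nat.find hN, Nat.lt_succ_of_le (Nat.find_min' hN fun j hj => absurd j.isLt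
    (not_lt.2 hj))⟩, fun j hj => ?_, Nat.find_spec hN⟩
  have hj : (j : ℕ) < Nat.find hN := hj
  have hmin := Nat.find_min hN (Nat.sub_one_lt_of_lt hj)
  push Not at hmin
  obtain ⟨j', hj', hle⟩ := hmin
  have hjj' : d.a j ≤ d.a j' := d.ha.monotone (Fin.le_def.2 (by omega))
  exact lt_of_le_of_ne (hjj'.trans hle) fun h => hx ⟨j, h⟩

lemma eventually_inOpenPiece {i : Fin (d.N + 1)} {x : ℝ} (h : d.InOpenPiece i x) :
    ∀ᶠ y in 𝓝 x, d.InOpenPiece i y :=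
  (eventually_all.2 fun j => eventually_imp_distrib_left.2 fun hj => lt_mem_nhds (h.1 j hj)).and
    (eventually_all.2 fun j => eventually_imp_distrib_left.2 fun hj => gt_mem_nhds (h.2 j hj))

def minValue : ℝ := Finset.univ.inf' Finset.univ_nonempty d.r

lemma minValue_pos : 0 < d.minValue :=
  (Finset.lt_inf'_iff _).2 fun i _ => d.hr i

lemma minValue_le (i : Fin (d.N + 1)) : d.minValue ≤ d.r i :=
  Finset.inf'_le _ (Finset.mem_univ i)

variable {d} {c : ℝ → ℝ}

lemma IsStepOf.minValue_le (hc : d.IsStepOf c) (x : ℝ) : d.minValue ≤ c x := by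
  by_cases hx : x ∈ range d.a
  · obtain ⟨j, rfl⟩ := hx
    rw [hc.2 j]
    exact le_min (d.minValue_le _) (d.minValue_le _)
  · obtain ⟨i, hi⟩ := d.exists_inOpenPiece hx
    rw [hc.1 i x hi]
    exact d.minValue_le i

lemma IsStepOf.continuousAt (hc : d.IsStepOf c) {x : ℝ} (hx : x ∉ range d.a) :
    ContinuousAt c x := by
  obtain ⟨i, hi⟩ := d.exists_inOpenPiece hx
  refine continuousAt_const.congr (?_ : (fun _ => d.r i) =ᶠ[𝓝 x] c)
  filter_upwards [d.eventually_inOpenPiece hi] with y hy using (hc.1 i y hy).symm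

end StepSpeedData

def IsTameSpeed (m : ℝ) (c : ℝ → ℝ) : Prop :=
  0 < m ∧ (∀ x, m ≤ c x) ∧ {x | ¬ ContinuousAt c x}.Countable

lemma IsStepSpeed.exists_isTameSpeed {c : ℝ → ℝ} (hc : IsStepSpeed c) : ∃ m, IsTameSpeed m c := by
  obtain ⟨d, hd⟩ := hc
  refine ⟨d.minValue, d.minValue_pos, hd.minValue_le,
    Set.Countable.mono (fun x hx => ?_) (finite_range d.a).countable⟩
  by_contra h
  exact hx (hd.continuousAt h)

namespace IsTameSpeed

variable {m : ℝ} {c : ℝ → ℝ}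

lemma inv_mem_Icc (hc : IsTameSpeed m c) (x : ℝ) : (c x)⁻¹ ∈ Icc 0 m⁻¹ :=
  ⟨inv_nonneg.2 (hc.1.trans_le (hc.2.1 x)).le, inv_anti₀ hc.1 (hc.2.1 x)⟩

lemma abs_inv_le (hc : IsTameSpeed m c) (x : ℝ) : |(c x)⁻¹| ≤ m⁻¹ := by
  obtain ⟨h0, h1⟩ := hc.inv_mem_Icc x
  rwa [abs_of_nonneg h0]

lemma countable_not_continuousAt_inv_comp_sub (hc : IsTameSpeed m c) (q : ℝ) :
    {x | ¬ ContinuousAt (fun x => (c (x - q))⁻¹) x}.Countable := by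
  refine Set.Countable.mono ?_ (hc.2.2.preimage (f := fun x => x - q) sub_left_injective)
  intro x hx h
  refine hx ?_
  exact (h.comp (f := fun x => x - q) (continuousAt_id.sub continuousAt_const)).inv₀
    (hc.1.trans_le (hc.2.1 _)).ne'

end IsTameSpeed

lemma countable_setOf_deriv_ne_zero_and_mem {f : ℝ → ℝ} {S : Set ℝ} (hS : S.Countable) :
    {t | deriv f t ≠ 0 ∧ f t ∈ S}.Countable := by
  have hsub : {t | deriv f t ≠ 0 ∧ f t ∈ S} ⊆ ⋃ s ∈ S, {t | deriv f t ≠ 0 ∧ f t = s} :=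
    fun t ht => mem_biUnion ht.2 ⟨ht.1, rfl⟩
  refine Set.Countable.mono hsub (hS.biUnion fun s _ => ?_)
  refine (HereditarilyLindelofSpace.isLindelof _).countable_of_isDiscrete
    (isDiscrete_iff_nhdsNE.2 fun t ht => inf_principal_eq_bot.2 ?_)
  filter_upwards [(differentiableAt_of_deriv_ne_zero ht.1).hasDerivAt.eventually_ne ht.1]
    with y hy h'y using hy h'y.2

lemma LipschitzWith.hasDerivAt_comp_of_hasDerivAt_zero {E F : Type*} [NormedAddCommGroup E]
    [NormedSpace ℝ E] [NormedAddCommGroup F] [NormedSpace ℝ F] {G : E → F} {K : NNReal}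
    (hG : LipschitzWith K G) {f : ℝ → E} {t : ℝ} (hf : HasDerivAt f 0 t) :
    HasDerivAt (G ∘ f) 0 t := by
  rw [hasDerivAt_iff_isLittleO] at hf ⊢
  simp only [smul_zero, sub_zero, Function.comp_apply] at hf ⊢
  exact (Asymptotics.IsBigO.of_bound K (Eventually.of_forall fun y =>
    hG.norm_sub_le (f y) (f t))).trans_isLittleO hf

theorem integral_comp_mul_deriv_of_countable_not_continuousAt {f f' g : ℝ → ℝ} {a b M : ℝ}
    (hab : a ≤ b) (hf : ContinuousOn f (Icc a b)) (hff' : ∀ x ∈ Ioo a b, HasDerivAt f (f' x) x)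
    (hg : {y | ¬ ContinuousAt g y}.Countable) (hgM : ∀ y, |g y| ≤ M)
    (hint : IntervalIntegrable (fun x => (g ∘ f) x * f' x) volume a b) :
    ∫ x in a..b, (g ∘ f) x * f' x = ∫ y in f a..f b, g y := by
  have hgm := measurable_of_countable_not_continuousAt hg
  have hgi : ∀ y z, IntervalIntegrable g volume y z := fun y z =>
    intervalIntegrable_const.mono_fun' hgm.aestronglyMeasurable (ae_of_all _ hgM)
  set G : ℝ → ℝ := fun y => ∫ z in f a..y, g z
  have hM : 0 ≤ M := (abs_nonneg _).trans (hgM 0)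
  have hG : LipschitzWith (Real.toNNReal M) G := LipschitzWith.of_dist_le_mul fun y z => by
    rw [Real.dist_eq, Real.dist_eq, Real.coe_toNNReal _ hM,
      intervalIntegral.integral_interval_sub_left (hgi _ _) (hgi _ _), ← Real.norm_eq_abs]
    exact intervalIntegral.norm_integral_le_of_norm_le_const fun x _ => hgM x
  have hG' : ∀ y, ContinuousAt g y → HasDerivAt G (g y) y := fun y hy =>
    intervalIntegral.integral_hasDerivAt_right (hgi _ _)
      hgm.stronglyMeasurable.stronglyMeasurableAtFilter hy
  have hFTC := integral_eq_of_hasDerivAt_off_countable_of_le (G ∘ f) _ hab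
    (countable_setOf_deriv_ne_zero_and_mem (f := f) hg) (hG.continuous.comp_continuousOn hf) ?_ hint
  · simpa [G] using hFTC
  -- off the exceptional set, either `G` is differentiable at `f x` or `f' x = 0`
  rintro x ⟨hx, hxS⟩
  by_cases hgx : ContinuousAt g (f x)
  · exact (hG' _ hgx).comp x (hff' x hx)
  · have hf'x : f' x = 0 := by
      by_contra h
      exact hxS ⟨(hff' x hx).deriv ▸ h, hgx⟩
    simpa [hf'x] using hG.hasDerivAt_comp_of_hasDerivAt_zero (hf'x ▸ hff' x hx)

lemma ContDiffOn.intervalIntegrable_comp_deriv_mul {f : ℝ → ℝ × ℝ} {σ τ M : ℝ} (hστ : σ < τ)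
    (hf : ContDiffOn ℝ 1 f (Icc σ τ)) {h : ℝ × ℝ → ℝ} (hh : Continuous h) {w : ℝ × ℝ → ℝ}
    (hw : Measurable w) (hwM : ∀ p, |w p| ≤ M) :
    IntervalIntegrable (fun s => h (deriv f s) * w (f s)) volume σ τ := by
  obtain ⟨K, hK⟩ := isCompact_Icc.exists_bound_of_continuousOn
    (hh.comp_continuousOn (hf.continuousOn_derivWithin (uniqueDiffOn_Icc hστ) le_rfl))
  rw [intervalIntegrable_iff_integrableOn_Ioo_of_le hστ.le]
  refine Integrable.of_bound ((hh.measurable.comp (measurable_deriv f)).aestronglyMeasurable.mul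
    (hw.comp_aemeasurable ((hf.continuousOn.mono Ioo_subset_Icc_self).aemeasurable
      measurableSet_Ioo)).aestronglyMeasurable) (K * M)
    ((ae_restrict_iff' measurableSet_Ioo).2 (ae_of_all _ fun s hs => ?_))
  rw [norm_mul, Real.norm_eq_abs (w _), ← derivWithin_of_mem_nhds (Icc_mem_nhds hs.1 hs.2)]
  exact mul_le_mul (hK s (Ioo_subset_Icc_self hs)) (hwM _) (abs_nonneg _)
    ((norm_nonneg _).trans (hK s (Ioo_subset_Icc_self hs)))

lemma continuous_gam : Continuous gam := by
  unfold gam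
  fun_prop

lemma integral_gam_mul_le_of_calibration {u : ℝ → ℝ} {M κ α β σ τ : ℝ} {f : ℝ → ℝ × ℝ}
    (huM : ∀ x, |u x| ≤ M) (hu : {x | ¬ ContinuousAt u x}.Countable)
    (hcal : ∀ x, ∀ v ∈ Wedge, gam v * u x ≤ κ * (v.1 * u x) + α * v.1 + β * v.2)
    (hστ : σ < τ) (hf : ContDiffOn ℝ 1 f (Icc σ τ)) (hW : ∀ s ∈ Ioo σ τ, deriv f s ∈ Wedge) :
    IntervalIntegrable (fun s => gam (deriv f s) * u (f s).1) volume σ τ ∧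
      ∫ s in σ..τ, gam (deriv f s) * u (f s).1 ≤
        κ * (∫ x in (f σ).1..(f τ).1, u x) + α * ((f τ).1 - (f σ).1) +
          β * ((f τ).2 - (f σ).2) := by
  have hum := measurable_of_countable_not_continuousAt hu
  have hd : ∀ s ∈ Ioo σ τ, HasDerivAt f (deriv f s) s := fun s hs =>
    ((hf.differentiableOn one_ne_zero s (Ioo_subset_Icc_self hs)).differentiableAt
      (Icc_mem_nhds hs.1 hs.2)).hasDerivAt
  have hd₁ : ∀ s ∈ Ioo σ τ, HasDerivAt (fun s => (f s).1) (deriv f s).1 s := fun s hs =>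
    by simpa using (hd s hs).hasFDerivAt.fst.hasDerivAt
  have hd₂ : ∀ s ∈ Ioo σ τ, HasDerivAt (fun s => (f s).2) (deriv f s).2 s := fun s hs =>
    by simpa using (hd s hs).hasFDerivAt.snd.hasDerivAt
  have hgam : IntervalIntegrable (fun s => gam (deriv f s) * u (f s).1) volume σ τ :=
    hf.intervalIntegrable_comp_deriv_mul hστ continuous_gam (hum.comp measurable_fst)
      fun p => huM p.1
  have hfst : IntervalIntegrable (fun s => u (f s).1 * (deriv f s).1) volume σ τ := by
    simpa only [mul_comm, Function.comp_apply] using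
      hf.intervalIntegrable_comp_deriv_mul hστ continuous_fst (hum.comp measurable_fst)
        fun p => huM p.1
  have hlin : IntervalIntegrable (fun s => α * (deriv f s).1 + β * (deriv f s).2) volume σ τ := by
    simpa using hf.intervalIntegrable_comp_deriv_mul hστ (h := fun v => α * v.1 + β * v.2)
      (by fun_prop) measurable_const fun _ => (abs_one (α := ℝ)).le
  have hfc := hf.continuousOn
  have hcv := integral_comp_mul_deriv_of_countable_not_continuousAt hστ.le
    (f := fun s => (f s).1) (by fun_prop) hd₁ hu huM hfst
  have hftc := intervalIntegral.integral_eq_sub_of_hasDerivAt_of_le hστ.le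
    (f := fun s => α * (f s).1 + β * (f s).2) (by fun_prop)
    (fun s hs => ((hd₁ s hs).const_mul α).add ((hd₂ s hs).const_mul β)) hlin
  refine ⟨hgam, ?_⟩
  calc ∫ s in σ..τ, gam (deriv f s) * u (f s).1
      ≤ ∫ s in σ..τ, (κ * (u (f s).1 * (deriv f s).1) + (α * (deriv f s).1 + β * (deriv f s).2)) :=
        intervalIntegral.integral_mono_on_of_le_Ioo hστ.le hgam ((hfst.const_mul κ).add hlin)
          fun s hs => by linarith [hcal (f s).1 _ (hW s hs)]
    _ = _ := by
        rw [intervalIntegral.integral_add (hfst.const_mul κ) hlin,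
          intervalIntegral.integral_const_mul]
        simp only [Function.comp_apply] at hcv
        rw [hcv, hftc]
        ring

lemma intervalIntegrable_and_integral_le_sub_of_partition {F Φ : ℝ → ℝ} :
    ∀ {k : ℕ} (s : Fin (k + 1) → ℝ),
      (∀ i : Fin k, IntervalIntegrable F volume (s i.castSucc) (s i.succ) ∧
        ∫ x in s i.castSucc..s i.succ, F x ≤ Φ (s i.succ) - Φ (s i.castSucc)) →
      IntervalIntegrable F volume (s 0) (s (Fin.last k)) ∧
        ∫ x in s 0..s (Fin.last k), F x ≤ Φ (s (Fin.last k)) - Φ (s 0)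
  | 0, s, _ => by simp
  | k + 1, s, h => by
    obtain ⟨hint, hle⟩ := intervalIntegrable_and_integral_le_sub_of_partition
      (fun i : Fin (k + 1) => s i.castSucc) fun i => by
        simpa only [Fin.succ_castSucc] using h i.castSucc
    obtain ⟨hint', hle'⟩ := h (Fin.last k)
    simp only [Fin.castSucc_zero, Fin.succ_last] at hint hle hint' hle'
    refine ⟨hint.trans hint', ?_⟩
    rw [← intervalIntegral.integral_add_adjacent_intervals hint hint']
    linarith

lemma wPathIntegral_le_of_calibration {c : ℝ → ℝ} {q m κ α β : ℝ} (hc : IsTameSpeed m c)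
    (hcal : ∀ x, ∀ v ∈ Wedge,
      gam v * (c (x - q))⁻¹ ≤ κ * (v.1 * (c (x - q))⁻¹) + α * v.1 + β * v.2)
    {p₀ p₁ : ℝ × ℝ} {f : ℝ → ℝ × ℝ} (hf : IsWedgePath p₀ p₁ f) :
    wPathIntegral c q f ≤
      κ * (∫ x in p₀.1..p₁.1, (c (x - q))⁻¹) + α * (p₁.1 - p₀.1) + β * (p₁.2 - p₀.2) := by
  obtain ⟨-, hf0, hf1, k, s, hs, hs0, hsk, hpieces⟩ := hf
  set u : ℝ → ℝ := fun x => (c (x - q))⁻¹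
  have hu : ∀ y z, IntervalIntegrable u volume y z := fun y z =>
    intervalIntegrable_const.mono_fun'
      (measurable_of_countable_not_continuousAt
        (hc.countable_not_continuousAt_inv_comp_sub q)).aestronglyMeasurable
      (ae_of_all _ fun x => hc.abs_inv_le _)
  set P : ℝ × ℝ → ℝ := fun p =>
    κ * (∫ x in p₀.1..p.1, u x) + α * (p.1 - p₀.1) + β * (p.2 - p₀.2)
  have hpath := intervalIntegrable_and_integral_le_sub_of_partition (F := fun t =>
    gam (deriv f t) * u (f t).1) (Φ := P ∘ f) s fun i => by
    obtain ⟨hint, hle⟩ := integral_gam_mul_le_of_calibration (fun x => hc.abs_inv_le _)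
      (hc.countable_not_continuousAt_inv_comp_sub q) hcal (hs Fin.castSucc_lt_succ)
      (hpieces i).1 (hpieces i).2
    refine ⟨hint, hle.trans_eq ?_⟩
    simp only [P, Function.comp_apply]
    rw [← intervalIntegral.integral_interval_sub_left (hu _ _) (hu _ _)]
    ring
  rw [hs0, hsk] at hpath
  simpa [wPathIntegral, div_eq_mul_inv, P, hf0, hf1] using hpath.2

lemma sub_mem_wedge_iff {p₀ p₁ : ℝ × ℝ} :
    p₁ - p₀ ∈ Wedge ↔ p₀.2 ≤ p₁.2 ∧ p₀.1 + p₀.2 ≤ p₁.1 + p₁.2 := by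
  simp only [Wedge, mem_ofPred_eq, Prod.fst_sub, Prod.snd_sub]
  constructor <;> rintro ⟨h₁, h₂⟩ <;> constructor <;> linarith

lemma isWedgePath_segment {p₀ p₁ : ℝ × ℝ} (h : p₁ - p₀ ∈ Wedge) :
    IsWedgePath p₀ p₁ fun s => p₀ + s • (p₁ - p₀) := by
  have hd : ∀ s : ℝ, HasDerivAt (fun s => p₀ + s • (p₁ - p₀)) (p₁ - p₀) s := fun s => by
    simpa using ((hasDerivAt_id s).smul_const (p₁ - p₀)).const_add p₀
  refine ⟨by fun_prop, by simp, by simp, 1, ![0, 1], ?_, rfl, rfl, fun _ => ⟨?_, fun s _ => ?_⟩⟩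
  · exact Fin.strictMono_iff_lt_succ.2 fun i => by fin_cases i; simp
  · exact (contDiff_const.add (contDiff_id.smul contDiff_const)).contDiffOn
  · rwa [(hd s).deriv]

lemma wPathIntegral_segment {c : ℝ → ℝ} {q κ : ℝ} {p₀ p₁ : ℝ × ℝ}
    (hκ : gam (p₁ - p₀) = κ * (p₁.1 - p₀.1)) :
    wPathIntegral c q (fun s => p₀ + s • (p₁ - p₀)) =
      κ * ∫ x in p₀.1..p₁.1, (c (x - q))⁻¹ := by
  have hd : ∀ s : ℝ, deriv (fun s => p₀ + s • (p₁ - p₀)) s = p₁ - p₀ := fun s => by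
    simpa using (((hasDerivAt_id s).smul_const (p₁ - p₀)).const_add p₀).deriv
  have h := intervalIntegral.smul_integral_comp_mul_add (a := 0) (b := 1)
    (fun x => (c (x - q))⁻¹) (p₁.1 - p₀.1) p₀.1
  simp only [mul_zero, mul_one, zero_add, sub_add_cancel, smul_eq_mul] at h
  rw [← h, ← intervalIntegral.integral_const_mul, ← intervalIntegral.integral_const_mul]
  refine intervalIntegral.integral_congr fun s _ => ?_
  simp only [hd, hκ, Prod.fst_add, Prod.smul_fst, Prod.fst_sub, smul_eq_mul]
  ring_nf

lemma gam_eq {v : ℝ × ℝ} (hv : v ∈ Wedge) :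
    gam v = v.1 + 2 * v.2 + 2 * √((v.1 + v.2) * v.2) := by
  have h₁ : 0 ≤ v.1 + v.2 := by linarith [hv.2]
  rw [gam, add_sq, sq_sqrt h₁, sq_sqrt hv.1, sqrt_mul h₁]
  ring

lemma gam_mul_le {v : ℝ × ℝ} (hv : v ∈ Wedge) {t y : ℝ} (ht : 0 < t) (hy : 0 ≤ y) :
    gam v * y ≤ v.1 * y + 2 * v.2 * y + y * (t * (v.1 + v.2) + v.2 / t) := by
  have h₁ : 0 ≤ v.1 + v.2 := by linarith [hv.2]
  -- AM-GM: `2 √(A B) = 2 √(t A) √(B / t) ≤ t A + B / t`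
  have hamgm : 2 * √((v.1 + v.2) * v.2) ≤ t * (v.1 + v.2) + v.2 / t := by
    have h := two_mul_le_add_sq (√(t * (v.1 + v.2))) (√(v.2 / t))
    rwa [mul_assoc, ← sqrt_mul (by positivity), sq_sqrt (by positivity),
      sq_sqrt (div_nonneg hv.1 ht.le), show t * (v.1 + v.2) * (v.2 / t) = (v.1 + v.2) * v.2 by field_simp] at h
  rw [gam_eq hv]
  nlinarith

section Calibrations

variable {v : ℝ × ℝ} {t y M : ℝ}

lemma gam_mul_le_add_fst_mul (hv : v ∈ Wedge) (ht : 0 < t) (hy : y ∈ Icc 0 M) :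
    gam v * y ≤ 1 * (v.1 * y) + M * t * v.1 + (2 * M + M * t + M / t) * v.2 := by
  have h₁ : 0 ≤ v.1 + v.2 := by linarith [hv.2]
  have h₂ : 0 ≤ t * (v.1 + v.2) + v.2 / t :=
    add_nonneg (mul_nonneg ht.le h₁) (div_nonneg hv.1 ht.le)
  calc gam v * y ≤ v.1 * y + 2 * v.2 * y + y * (t * (v.1 + v.2) + v.2 / t) :=
        gam_mul_le hv ht hy.1
    _ ≤ v.1 * y + 2 * v.2 * M + M * (t * (v.1 + v.2) + v.2 / t) := by
        gcongr
        · linarith [hv.1]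
        · exact hy.2
        · exact hy.2
    _ = _ := by ring

lemma gam_mul_le_sub_fst_mul (hv : v ∈ Wedge) (ht : 0 < t) (hy : y ∈ Icc 0 M) :
    gam v * y ≤ -1 * (v.1 * y) + (2 * M + M / t) * v.1 + (2 * M + M * t + M / t) * v.2 := by
  have h₁ : 0 ≤ v.1 + v.2 := by linarith [hv.2]
  have h₂ : 0 ≤ t⁻¹ * (v.1 + v.2) + v.2 / t⁻¹ :=
    add_nonneg (mul_nonneg (inv_nonneg.2 ht.le) h₁) (div_nonneg hv.1 (inv_nonneg.2 ht.le))
  calc gam v * y ≤ v.1 * y + 2 * v.2 * y + y * (t⁻¹ * (v.1 + v.2) + v.2 / t⁻¹) :=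
        gam_mul_le hv (inv_pos.2 ht) hy.1
    _ = -(v.1 * y) + 2 * (v.1 + v.2) * y + y * (t⁻¹ * (v.1 + v.2) + v.2 / t⁻¹) := by ring
    _ ≤ -(v.1 * y) + 2 * (v.1 + v.2) * M + M * (t⁻¹ * (v.1 + v.2) + v.2 / t⁻¹) := by
        gcongr
        · exact hy.2
        · exact hy.2
    _ = _ := by rw [div_inv_eq_mul]; ring

end Calibrations

section GammaBounds

variable {c : ℝ → ℝ} {q m κ : ℝ} {p₀ p₁ : ℝ × ℝ}

lemma GammaFrom_le_of_calibration {α β : ℝ} (hc : IsTameSpeed m c)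
    (hcal : ∀ x, ∀ v ∈ Wedge,
      gam v * (c (x - q))⁻¹ ≤ κ * (v.1 * (c (x - q))⁻¹) + α * v.1 + β * v.2)
    (h : p₁ - p₀ ∈ Wedge) :
    GammaFrom c q p₀ p₁ ≤
      κ * (∫ x in p₀.1..p₁.1, (c (x - q))⁻¹) + α * (p₁.1 - p₀.1) + β * (p₁.2 - p₀.2) :=
  csSup_le ⟨_, _, isWedgePath_segment h, rfl⟩ fun _ ⟨_, hf, hI⟩ =>
    hI ▸ wPathIntegral_le_of_calibration hc hcal hf

lemma le_GammaFrom_of_gam_eq (hc : IsTameSpeed m c) (h : p₁ - p₀ ∈ Wedge)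
    (hκ : gam (p₁ - p₀) = κ * (p₁.1 - p₀.1)) :
    κ * ∫ x in p₀.1..p₁.1, (c (x - q))⁻¹ ≤ GammaFrom c q p₀ p₁ := by
  rw [← wPathIntegral_segment hκ]
  refine le_csSup ⟨_, fun _ ⟨f, hf, hI⟩ => hI ▸ wPathIntegral_le_of_calibration hc
    (fun x v hv => gam_mul_le_add_fst_mul hv one_pos (hc.inv_mem_Icc _)) hf⟩
    ⟨_, isWedgePath_segment h, rfl⟩

end GammaBounds

lemma calibration_gap_le {M δ A B : ℝ} (hM : 0 ≤ M) (hδ : δ ∈ Ioc 0 1) (hAB : A ≤ B) :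
    M * √δ * A + (2 * M + M * √δ + M / √δ) * δ ≤ M * (B + 4) * √δ := by
  obtain ⟨s, hs, rfl⟩ : ∃ s, 0 < s ∧ δ = s ^ 2 := ⟨√δ, sqrt_pos.2 hδ.1, (sq_sqrt hδ.1.le).symm⟩
  have hs1 : s ≤ 1 := by nlinarith [hδ.2]
  rw [sqrt_sq hs.le]
  calc M * s * A + (2 * M + M * s + M / s) * s ^ 2
      = M * s * A + M * s * (2 * s + s ^ 2 + 1) := by field_simp
    _ ≤ M * s * B + M * s * (2 * 1 + 1 ^ 2 + 1) := by gcongr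
    _ = M * (B + 4) * s := by ring

/-- Theorem: modulus of continuity `C√δ` for `Γ^q` along the wedge boundary directions. -/
theorem stmt6 (c : ℝ → ℝ) (hc : IsStepSpeed c) (q z w : ℝ) (hz : 0 < z) (hw : 0 < w) :
    ∃ C : ℝ, ∀ δ ∈ Ioc (0 : ℝ) 1,
      (∀ a ∈ Icc (0 : ℝ) z,
        GammaFrom c q (a, 0) (z, δ) - GammaFrom c q (a, 0) (z, 0) ≤ C * Real.sqrt δ) ∧
      (∀ b ∈ Icc (0 : ℝ) w,
        GammaFrom c q (-b, b) (-w, w + δ) - GammaFrom c q (-b, b) (-w, w) ≤ C * Real.sqrt δ) := by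
  obtain ⟨m, hc⟩ := hc.exists_isTameSpeed
  have hM : 0 ≤ m⁻¹ := (inv_pos.2 hc.1).le
  refine ⟨m⁻¹ * (z + w + 4), fun δ hδ => ⟨fun a ha => ?_, fun b hb => ?_⟩⟩
  · have hup := GammaFrom_le_of_calibration (q := q) (p₀ := (a, 0)) (p₁ := (z, δ)) hc
      (fun x v hv => gam_mul_le_add_fst_mul hv (sqrt_pos.2 hδ.1) (hc.inv_mem_Icc _))
      (sub_mem_wedge_iff.2 ⟨hδ.1.le, by linarith [ha.2, hδ.1]⟩)
    have hlow := le_GammaFrom_of_gam_eq (q := q) (p₀ := (a, 0)) (p₁ := (z, 0)) (κ := 1) hc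
      (sub_mem_wedge_iff.2 ⟨le_rfl, by linarith [ha.2]⟩)
      (by simp [gam, sq_sqrt (sub_nonneg.2 ha.2)])
    have hgap := calibration_gap_le hM hδ (show z - a ≤ z + w by linarith [ha.1])
    simp only [sub_zero] at hup hlow
    linarith
  · have hup := GammaFrom_le_of_calibration (q := q) (p₀ := (-b, b)) (p₁ := (-w, w + δ)) hc
      (fun x v hv => gam_mul_le_sub_fst_mul hv (sqrt_pos.2 hδ.1) (hc.inv_mem_Icc _))
      (sub_mem_wedge_iff.2 ⟨by linarith [hb.2, hδ.1], by linarith [hδ.1]⟩)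
    have hlow := le_GammaFrom_of_gam_eq (q := q) (p₀ := (-b, b)) (p₁ := (-w, w)) (κ := -1) hc
      (sub_mem_wedge_iff.2 ⟨hb.2, by linarith⟩)
      (by simp [gam, sq_sqrt (sub_nonneg.2 hb.2), neg_add_eq_sub])
    have hgap := calibration_gap_le hM hδ (show w - b ≤ z + w by linarith [hb.1])
    simp only at hup hlow
    linarith

end
end

section
/- Let c be a speed function and ρ₀ : ℝ → [0,1] a measurable initial profile with antiderivative v₀. Then the function v(x,t) defined by the variational formula is Lipschitz continuous on every compact subset of ℝ × (0,∞). -/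
open MeasureTheory ProbabilityTheory Real Set Filter Topology

noncomputable section


/-! ### The Hopf–Lax type variational formula for TASEP with discontinuous rates -/

/-- The wedge shape function `g`: `g(y) = -y` for `y ≤ -1`, `(1-y)²/4` for `-1 ≤ y ≤ 1`,
`0` for `y ≥ 1`. -/
def gfun (y : ℝ) : ℝ := if y ≤ -1 then -y else if y ≤ 1 then (1 - y) ^ 2 / 4 else 0

/-- A continuous, piecewise `C¹` path `w : [0,t] → ℝ` with `w(t) = x`. -/
def IsVPath (t x : ℝ) (w : ℝ → ℝ) : Prop :=
  ContinuousOn w (Icc 0 t) ∧ w t = x ∧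
    ∃ (k : ℕ) (s : Fin (k + 1) → ℝ), StrictMono s ∧ s 0 = 0 ∧ s (Fin.last k) = t ∧
      ∀ i : Fin k, ContDiffOn ℝ 1 w (Icc (s i.castSucc) (s i.succ))

/-- `w` is affine on `[a,b]`. -/
def AffineOnR (w : ℝ → ℝ) (a b : ℝ) : Prop :=
  ∀ u ∈ Icc a b, w u = w a + ((u - a) / (b - a)) * (w b - w a)

/-- A continuous, piecewise linear path `w : [0,t] → ℝ` with `w(t) = x`. -/
def IsPLPath (t x : ℝ) (w : ℝ → ℝ) : Prop :=
  ContinuousOn w (Icc 0 t) ∧ w t = x ∧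
    ∃ (k : ℕ) (s : Fin (k + 1) → ℝ), StrictMono s ∧ s 0 = 0 ∧ s (Fin.last k) = t ∧
      ∀ i : Fin k, AffineOnR w (s i.castSucc) (s i.succ)

/-- `v₀` is an antiderivative of the initial profile `ρ₀`, normalized by `v₀(0) = 0`. -/
def IsV0For (ρ₀ v₀ : ℝ → ℝ) : Prop :=
  v₀ 0 = 0 ∧ ∀ a b : ℝ, v₀ b - v₀ a = ∫ x in a..b, ρ₀ x

/-- The variational formula:
`v(x,t) = sup over paths w with w(t) = x of { v₀(w(0)) - ∫₀ᵗ c(w(s)) g(w'(s)/c(w(s))) ds }`,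
with `v(x,0) = v₀(x)`. -/
def vFun (c v₀ : ℝ → ℝ) (x t : ℝ) : ℝ :=
  if t ≤ 0 then v₀ x
  else sSup { A | ∃ w : ℝ → ℝ, IsVPath t x w ∧
    A = v₀ (w 0) - ∫ s in (0:ℝ)..t, c (w s) * gfun (deriv w s / c (w s)) }

/-- The two-phase speed function: `c₁` to the left of the origin, `c₂` to its right. -/
def twoPhase (c₁ c₂ : ℝ) : ℝ → ℝ := fun u => if u < 0 then c₁ else c₂

/-- The conjugate `(a·h)*(y) = inf_{ρ ∈ ℝ} ( yρ - a ρ(1-ρ) )` of the unrestricted flux. -/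
def hstar (a y : ℝ) : ℝ := sInf { v | ∃ ρ : ℝ, v = y * ρ - a * (ρ * (1 - ρ)) }

/-- The Hopf–Lax formula over piecewise linear paths with the conjugate `(c·h)*`. -/
def VFunPL (c v₀ : ℝ → ℝ) (x t : ℝ) : ℝ :=
  sSup { A | ∃ w : ℝ → ℝ, IsPLPath t x w ∧
    A = v₀ (w 0) + ∫ s in (0:ℝ)..t, hstar (c (w s)) (deriv w s) }

/-!
Since `g y ≥ max 0 (-y)`, a path pays at least the distance it moves to the left, while `v₀` is
nondecreasing and 1-Lipschitz because `0 ≤ ρ₀ ≤ 1`; hence `v(x, t) ≤ v₀(x)` and the supremum is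
finite. Given a path to `(x', t')` and `t ≤ t'`, follow it up to time `t - δ` and then run
straight to `x`: the straight piece costs at most `(max c) δ / 4` plus the distance it moves to the
left, while the discarded part of the old path cost at least its own leftward displacement. Letting
`δ → 0` gives `v(x', t') ≤ v(x, t) + max 0 (x' - x)`. Waiting at `x` during `[t, t']` costs
`c(x) (t' - t) / 4`, so `v(x, t) - c(x) (t' - t) / 4 ≤ v(x, t')`. Thus on a compact subset of
`{t > 0}` the function `v` is 1-Lipschitz in space and `(max c) / 4`-Lipschitz in time.
-/

open scoped Interval

lemma max_zero_neg_le_gfun (y : ℝ) : max 0 (-y) ≤ gfun y := by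
  unfold gfun
  split_ifs
  · exact max_le (by linarith) le_rfl
  · exact max_le (by positivity) (by nlinarith)
  · exact max_le le_rfl (by linarith)

lemma gfun_le (y : ℝ) : gfun y ≤ 1 / 4 + max 0 (-y) := by
  unfold gfun
  split_ifs
  · linarith [le_max_right 0 (-y)]
  · rcases le_total y 0 with hy | hy
    · nlinarith [le_max_right 0 (-y)]
    · nlinarith [le_max_left 0 (-y)]
  · linarith [le_max_left 0 (-y)]

lemma continuous_gfun : Continuous gfun :=
  Continuous.if_le continuous_neg
    (Continuous.if_le (by fun_prop) continuous_const continuous_id continuous_const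
      fun y hy => by norm_num [hy])
    continuous_id continuous_const fun y hy => by norm_num [hy]

lemma mul_max_zero_neg_div {a : ℝ} (ha : 0 < a) (y : ℝ) :
    a * max 0 (-(y / a)) = max 0 (-y) := by
  rw [mul_max_of_nonneg _ _ ha.le, mul_zero, mul_neg, mul_div_cancel₀ _ ha.ne']

lemma max_zero_neg_le_mul_gfun_div {a : ℝ} (ha : 0 < a) (y : ℝ) :
    max 0 (-y) ≤ a * gfun (y / a) :=
  mul_max_zero_neg_div ha y ▸ mul_le_mul_of_nonneg_left (max_zero_neg_le_gfun _) ha.le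

lemma mul_gfun_div_le {a : ℝ} (ha : 0 < a) (y : ℝ) :
    a * gfun (y / a) ≤ a / 4 + max 0 (-y) :=
  calc a * gfun (y / a) ≤ a * (1 / 4 + max 0 (-(y / a))) :=
        mul_le_mul_of_nonneg_left (gfun_le _) ha.le
    _ = a / 4 + max 0 (-y) := by rw [mul_add, mul_max_zero_neg_div ha]; ring

namespace IsSpeedFunction

variable {c : ℝ → ℝ}

lemma pos (hc : IsSpeedFunction c) (x : ℝ) : 0 < c x := hc.1 x

lemma measurable (hc : IsSpeedFunction c) : Measurable c := hc.2.1.measurable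

lemma eventually_le (hc : IsSpeedFunction c) (x : ℝ) : ∃ M, ∀ᶠ y in 𝓝 x, c y ≤ M := by
  obtain ⟨l, r, hl, hr, hx⟩ := hc.2.2.1 x
  refine ⟨max l r + 1, ?_⟩
  rw [← nhdsNE_sup_pure, ← nhdsLT_sup_nhdsGT, eventually_sup, eventually_sup, eventually_pure]
  refine ⟨⟨hl.eventually_le_const ?_, hr.eventually_le_const ?_⟩, ?_⟩
  · linarith [le_max_left l r]
  · linarith [le_max_right l r]
  · linarith [hx ▸ min_le_max (a := l) (b := r)]

lemma bddAbove_image (hc : IsSpeedFunction c) {K : Set ℝ} (hK : IsCompact K) :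
    BddAbove (c '' K) := by
  refine (Bornology.isBounded_image_of_isLocallyBounded_of_isCompact hK fun x => ?_).bddAbove
  obtain ⟨M, hM⟩ := hc.eventually_le x
  exact ⟨_, hM, (Metric.isBounded_Icc 0 M).subset <| by
    rintro _ ⟨y, hy, rfl⟩
    exact ⟨(hc.pos y).le, hy⟩⟩

end IsSpeedFunction

lemma IsV0For.sub_le_max_zero_sub {ρ₀ v₀ : ℝ → ℝ} (hρ : ∀ x, ρ₀ x ∈ Icc (0 : ℝ) 1)
    (hv₀ : IsV0For ρ₀ v₀) (a b : ℝ) : v₀ a - v₀ b ≤ max 0 (a - b) := by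
  rcases le_total a b with hab | hba
  · have : 0 ≤ v₀ b - v₀ a :=
      hv₀.2 a b ▸ intervalIntegral.integral_nonneg hab fun x _ => (hρ x).1
    exact le_max_of_le_left (by linarith)
  · have h := intervalIntegral.norm_integral_le_of_norm_le_const (a := b) (b := a) (C := 1)
      (f := ρ₀) fun x _ => by
        rw [Real.norm_eq_abs, abs_le]
        exact ⟨by linarith [(hρ x).1], (hρ x).2⟩
    rw [← hv₀.2 b a, Real.norm_eq_abs, one_mul, abs_of_nonneg (sub_nonneg.2 hba)] at h
    exact le_max_of_le_right ((le_abs_self _).trans h)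

def PiecewiseOn (P : ℝ → ℝ → Prop) (a b : ℝ) : Prop :=
  ∃ (k : ℕ) (s : Fin (k + 1) → ℝ), StrictMono s ∧ s 0 = a ∧ s (Fin.last k) = b ∧
    ∀ i : Fin k, P (s i.castSucc) (s i.succ)

lemma isVPath_iff {t x : ℝ} {w : ℝ → ℝ} :
    IsVPath t x w ↔ ContinuousOn w (Icc 0 t) ∧ w t = x ∧
      PiecewiseOn (fun a b => ContDiffOn ℝ 1 w (Icc a b)) 0 t :=
  Iff.rfl

namespace PiecewiseOn

variable {P Q : ℝ → ℝ → Prop} {a b c : ℝ}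

lemma refl (a : ℝ) : PiecewiseOn P a a :=
  ⟨0, fun _ => a, Fin.strictMono_iff_lt_succ.2 fun i => i.elim0, rfl, rfl, fun i => i.elim0⟩

lemma snoc (h : PiecewiseOn P a b) (hbc : b < c) (hP : P b c) : PiecewiseOn P a c := by
  obtain ⟨k, s, hs, hs₀, hsk, hPs⟩ := h
  refine ⟨k + 1, Fin.snoc s c, ?_, by simpa using hs₀, by simp, fun i => ?_⟩
  · simpa [Fin.insertNth_last'] using Fin.strictMono_insertNth_last hs c (hsk ▸ hbc)
  · obtain ⟨i, rfl⟩ | rfl := i.eq_castSucc_or_eq_last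
    · rw [Fin.succ_castSucc, Fin.snoc_castSucc, Fin.snoc_castSucc]
      exact hPs i
    · simpa [hsk] using hP

lemma imp (h : PiecewiseOn P a b) (hPQ : ∀ x y, a ≤ x → y ≤ b → P x y → Q x y) :
    PiecewiseOn Q a b := by
  obtain ⟨k, s, hs, hs₀, hsk, hPs⟩ := h
  exact ⟨k, s, hs, hs₀, hsk, fun i =>
    hPQ _ _ (hs₀ ▸ hs.monotone (Fin.zero_le _)) (hsk ▸ hs.monotone (Fin.le_last _)) (hPs i)⟩

lemma truncate (hP : ∀ ⦃x y x' y'⦄, P x y → x ≤ x' → x' < y' → y' ≤ y → P x' y')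
    (h : PiecewiseOn P a b) {T : ℝ} (haT : a < T) (hTb : T ≤ b) : PiecewiseOn P a T := by
  obtain ⟨k, s, hs, hs₀, hsk, hPs⟩ := h
  induction k generalizing b with
  | zero => exact absurd (hs₀.symm.trans hsk) (by linarith : a ≠ b)
  | succ k ih =>
    have hinit : PiecewiseOn P a (s (Fin.last k).castSucc) :=
      ⟨k, s ∘ Fin.castSucc, hs.comp Fin.strictMono_castSucc, hs₀, rfl, fun i => hPs i.castSucc⟩
    by_cases hT : T ≤ s (Fin.last k).castSucc
    · exact ih hT _ (hs.comp Fin.strictMono_castSucc) hs₀ rfl fun i => hPs i.castSucc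
    · push Not at hT
      exact hinit.snoc hT (hP (hPs (Fin.last k)) le_rfl hT (hsk ▸ hTb))

end PiecewiseOn

def HasBoundedDerivOffCountable (w : ℝ → ℝ) (a b : ℝ) : Prop :=
  ContinuousOn w (Icc a b) ∧ ∃ S : Set ℝ, S.Countable ∧
    ∃ M, ∀ u ∈ Ioo a b \ S, DifferentiableAt ℝ w u ∧ |deriv w u| ≤ M

lemma ae_mem_Ioo_diff_of_countable {S : Set ℝ} (hS : S.Countable) {a b : ℝ} (hab : a ≤ b) :
    ∀ᵐ u ∂volume.restrict (Ι a b), u ∈ Ioo a b \ S := by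
  rw [uIoc_of_le hab, ae_restrict_iff' measurableSet_Ioc]
  filter_upwards [(hS.insert b).ae_notMem volume] with u hu hmem
  simp only [mem_insert_iff, not_or] at hu
  exact ⟨⟨hmem.1, lt_of_le_of_ne hmem.2 hu.1⟩, hu.2⟩

namespace HasBoundedDerivOffCountable

variable {w : ℝ → ℝ} {a b : ℝ}

lemma mono (h : HasBoundedDerivOffCountable w a b) {a' b' : ℝ} (ha : a ≤ a') (hb : b' ≤ b) :
    HasBoundedDerivOffCountable w a' b' := by
  obtain ⟨hcont, S, hS, M, hM⟩ := h
  exact ⟨hcont.mono (Icc_subset_Icc ha hb), S, hS, M, fun u hu =>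
    hM u ⟨Ioo_subset_Ioo ha hb hu.1, hu.2⟩⟩

lemma intervalIntegrable_deriv (h : HasBoundedDerivOffCountable w a b) (hab : a ≤ b) :
    IntervalIntegrable (deriv w) volume a b := by
  obtain ⟨-, S, hS, M, hM⟩ := h
  refine (intervalIntegrable_const (c := M)).mono_fun' (measurable_deriv w).aestronglyMeasurable ?_
  filter_upwards [ae_mem_Ioo_diff_of_countable hS hab] with u hu
  exact (hM u hu).2

lemma integral_deriv (h : HasBoundedDerivOffCountable w a b) (hab : a ≤ b) :
    ∫ u in a..b, deriv w u = w b - w a := by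
  obtain ⟨hcont, S, hS, M, hM⟩ := h
  exact integral_eq_of_hasDerivAt_off_countable_of_le w (deriv w) hab hS hcont
    (fun u hu => (hM u hu).1.hasDerivAt) (intervalIntegrable_deriv ⟨hcont, S, hS, M, hM⟩ hab)

end HasBoundedDerivOffCountable

lemma Fin.exists_castSucc_le_lt_succ {α : Type*} [LinearOrder α] {k : ℕ} (s : Fin (k + 1) → α)
    {u : α} (h₀ : s 0 ≤ u) (hk : u < s (Fin.last k)) :
    ∃ i : Fin k, s i.castSucc ≤ u ∧ u < s i.succ := by
  by_contra! h
  exact (Fin.induction (motive := fun j => s j ≤ u) h₀ h (Fin.last k)).not_gt hk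

lemma IsVPath.hasBoundedDerivOffCountable {t x : ℝ} {w : ℝ → ℝ} (hw : IsVPath t x w) :
    HasBoundedDerivOffCountable w 0 t := by
  obtain ⟨hcont, -, k, s, hs, hs₀, hsk, hC1⟩ := hw
  have hbound : ∀ i : Fin k, ∃ C, ∀ u ∈ Icc (s i.castSucc) (s i.succ),
      ‖derivWithin w (Icc (s i.castSucc) (s i.succ)) u‖ ≤ C := fun i =>
    isCompact_Icc.exists_bound_of_continuousOn <| (hC1 i).continuousOn_derivWithin
      (uniqueDiffOn_Icc (hs (Fin.castSucc_lt_succ (i := i)))) le_rfl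
  choose C hC using hbound
  obtain ⟨M, hM⟩ := Finite.bddAbove_range C
  refine ⟨hcont, range s, (finite_range s).countable, M, fun u ⟨hu, hus⟩ => ?_⟩
  obtain ⟨i, hi₁, hi₂⟩ := Fin.exists_castSucc_le_lt_succ s (hs₀ ▸ hu.1.le) (hsk ▸ hu.2)
  have hi₁' : s i.castSucc < u := lt_of_le_of_ne hi₁ fun h => hus ⟨_, h⟩
  have hnhds : Icc (s i.castSucc) (s i.succ) ∈ 𝓝 u := Icc_mem_nhds hi₁' hi₂
  have hdiff : DifferentiableAt ℝ w u :=
    ((hC1 i).differentiableOn one_ne_zero u ⟨hi₁, hi₂.le⟩).differentiableAt hnhds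
  refine ⟨hdiff, ?_⟩
  rw [← derivWithin_of_mem_nhds hnhds, ← Real.norm_eq_abs]
  exact (hC i u ⟨hi₁, hi₂.le⟩).trans (hM ⟨i, rfl⟩)

def lagrangian (c w : ℝ → ℝ) (u : ℝ) : ℝ := c (w u) * gfun (deriv w u / c (w u))

section Lagrangian

variable {c w : ℝ → ℝ} {a b : ℝ}

lemma max_zero_neg_deriv_le_lagrangian (hc : IsSpeedFunction c) (w : ℝ → ℝ) (u : ℝ) :
    max 0 (-deriv w u) ≤ lagrangian c w u :=
  max_zero_neg_le_mul_gfun_div (hc.pos _) _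

lemma lagrangian_le (hc : IsSpeedFunction c) (w : ℝ → ℝ) (u : ℝ) :
    lagrangian c w u ≤ c (w u) / 4 + max 0 (-deriv w u) :=
  mul_gfun_div_le (hc.pos _) _

lemma integral_lagrangian_congr {f : ℝ → ℝ} (hab : a ≤ b) (h : EqOn w f (Ioo a b)) :
    ∫ u in a..b, lagrangian c w u = ∫ u in a..b, lagrangian c f u := by
  simp only [intervalIntegral.integral_of_le hab, integral_Ioc_eq_integral_Ioo]
  refine setIntegral_congr_fun measurableSet_Ioo fun u hu => ?_
  have hwf : w =ᶠ[𝓝 u] f := eventually_of_mem (isOpen_Ioo.mem_nhds hu) h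
  simp only [lagrangian, hwf.deriv_eq, h hu]

namespace HasBoundedDerivOffCountable

lemma intervalIntegrable_lagrangian (hc : IsSpeedFunction c)
    (h : HasBoundedDerivOffCountable w a b) (hab : a ≤ b) :
    IntervalIntegrable (lagrangian c w) volume a b := by
  obtain ⟨hcont, S, hS, M, hM⟩ := h
  obtain ⟨C, hC⟩ := hc.bddAbove_image (isCompact_Icc.image_of_continuousOn hcont)
  have hcw : AEMeasurable (fun u => c (w u)) (volume.restrict (Ι a b)) := by
    rw [uIoc_of_le hab]
    exact hc.measurable.comp_aemeasurable
      ((hcont.mono Ioc_subset_Icc_self).aemeasurable measurableSet_Ioc)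
  have hmeas : AEStronglyMeasurable (lagrangian c w) (volume.restrict (Ι a b)) :=
    (hcw.mul (continuous_gfun.measurable.comp_aemeasurable
      ((measurable_deriv w).aemeasurable.div hcw))).aestronglyMeasurable
  refine (intervalIntegrable_const (c := C / 4 + M)).mono_fun' hmeas ?_
  filter_upwards [ae_mem_Ioo_diff_of_countable hS hab] with u hu
  have hcu : c (w u) ≤ C := hC (mem_image_of_mem c (mem_image_of_mem w (Ioo_subset_Icc_self hu.1)))
  have hdu : max 0 (-deriv w u) ≤ M :=
    max_le ((abs_nonneg _).trans (hM u hu).2) ((neg_le_abs _).trans (hM u hu).2)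
  rw [Real.norm_eq_abs, abs_of_nonneg ((le_max_left _ _).trans
    (max_zero_neg_deriv_le_lagrangian hc w u))]
  linarith [lagrangian_le hc w u]

lemma max_sub_le_integral_lagrangian (hc : IsSpeedFunction c)
    (h : HasBoundedDerivOffCountable w a b) (hab : a ≤ b) :
    max 0 (w a - w b) ≤ ∫ u in a..b, lagrangian c w u := by
  have hL := fun u => max_zero_neg_deriv_le_lagrangian hc w u
  refine max_le (intervalIntegral.integral_nonneg hab fun u _ => (le_max_left _ _).trans (hL u)) ?_
  calc w a - w b = ∫ u in a..b, -deriv w u := by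
        rw [intervalIntegral.integral_neg, h.integral_deriv hab, neg_sub]
    _ ≤ ∫ u in a..b, lagrangian c w u :=
        intervalIntegral.integral_mono_on hab (h.intervalIntegrable_deriv hab).neg
          (h.intervalIntegrable_lagrangian hc hab) fun u _ => (le_max_right _ _).trans (hL u)

end HasBoundedDerivOffCountable

end Lagrangian

def linearPath (a b y₀ y₁ : ℝ) (u : ℝ) : ℝ := y₀ + (u - a) / (b - a) * (y₁ - y₀)

section LinearPath

variable {c : ℝ → ℝ} {a b y₀ y₁ : ℝ}

lemma linearPath_left : linearPath a b y₀ y₁ a = y₀ := by simp [linearPath]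

lemma linearPath_right (hab : a < b) : linearPath a b y₀ y₁ b = y₁ := by
  simp [linearPath, div_self (sub_ne_zero.2 hab.ne')]

lemma hasDerivAt_linearPath (u : ℝ) :
    HasDerivAt (linearPath a b y₀ y₁) ((y₁ - y₀) / (b - a)) u :=
  ((((hasDerivAt_id' u).sub_const a).div_const (b - a)).mul_const (y₁ - y₀)).const_add y₀
    |>.congr_deriv (by ring)

lemma contDiff_linearPath : ContDiff ℝ 1 (linearPath a b y₀ y₁) := by
  unfold linearPath
  fun_prop

lemma linearPath_mem_uIcc (hab : a < b) {u : ℝ} (hu : u ∈ Icc a b) :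
    linearPath a b y₀ y₁ u ∈ uIcc y₀ y₁ :=
  (convex_uIcc y₀ y₁).add_smul_sub_mem left_mem_uIcc right_mem_uIcc
    ⟨div_nonneg (sub_nonneg.2 hu.1) (sub_nonneg.2 hab.le),
      div_le_one_of_le₀ (by linarith [hu.2]) (sub_nonneg.2 hab.le)⟩

lemma hasBoundedDerivOffCountable_linearPath (a' b' : ℝ) :
    HasBoundedDerivOffCountable (linearPath a b y₀ y₁) a' b' :=
  ⟨contDiff_linearPath.continuous.continuousOn, ∅, countable_empty, _, fun u _ =>
    ⟨(hasDerivAt_linearPath u).differentiableAt, by rw [(hasDerivAt_linearPath u).deriv]⟩⟩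

lemma integral_lagrangian_linearPath_le (hc : IsSpeedFunction c) (hab : a < b) {M : ℝ}
    (hM : ∀ y ∈ uIcc y₀ y₁, c y ≤ M) :
    ∫ u in a..b, lagrangian c (linearPath a b y₀ y₁) u ≤ M * (b - a) / 4 + max 0 (y₀ - y₁) := by
  set m := (y₁ - y₀) / (b - a)
  have hm : (b - a) * -m = y₀ - y₁ := by
    simp only [m]
    field_simp [sub_ne_zero.2 hab.ne']
    ring
  calc ∫ u in a..b, lagrangian c (linearPath a b y₀ y₁) u
      ≤ ∫ _ in a..b, (M / 4 + max 0 (-m)) :=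
        intervalIntegral.integral_mono_on hab.le
          ((hasBoundedDerivOffCountable_linearPath a b).intervalIntegrable_lagrangian hc hab.le)
          intervalIntegrable_const fun u hu => by
            have h := lagrangian_le hc (linearPath a b y₀ y₁) u
            rw [(hasDerivAt_linearPath u).deriv] at h
            linarith [hM _ (linearPath_mem_uIcc hab hu)]
    _ = M * (b - a) / 4 + max 0 (y₀ - y₁) := by
        rw [intervalIntegral.integral_const, smul_eq_mul, mul_add,
          mul_max_of_nonneg _ _ (sub_nonneg.2 hab.le), mul_zero, hm]
        ring

end LinearPath

def redirect (w : ℝ → ℝ) (T₁ T x : ℝ) (u : ℝ) : ℝ :=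
  if u ≤ T₁ then w u else linearPath T₁ T (w T₁) x u

section Redirect

variable {c w : ℝ → ℝ} {t' x' T₁ T x : ℝ}

lemma redirect_of_le {u : ℝ} (hu : u ≤ T₁) : redirect w T₁ T x u = w u := if_pos hu

lemma eqOn_redirect_linearPath :
    EqOn (redirect w T₁ T x) (linearPath T₁ T (w T₁) x) (Icc T₁ T) := by
  intro u hu
  rcases hu.1.eq_or_lt with rfl | h
  · rw [redirect_of_le le_rfl, linearPath_left]
  · exact if_neg h.not_ge

lemma IsVPath.redirect (hw : IsVPath t' x' w) (hT₁ : 0 < T₁) (hT₁t' : T₁ ≤ t') (hT : T₁ < T) :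
    IsVPath T x (redirect w T₁ T x) := by
  obtain ⟨hcont, -, hpw⟩ := isVPath_iff.1 hw
  have hEq : EqOn (_root_.redirect w T₁ T x) w (Icc 0 T₁) := fun u hu => redirect_of_le hu.2
  refine isVPath_iff.2 ⟨?_, (eqOn_redirect_linearPath ⟨hT.le, le_rfl⟩).trans (linearPath_right hT),
    ?_⟩
  · rw [← Icc_union_Icc_eq_Icc hT₁.le hT.le]
    exact ((hcont.mono (Icc_subset_Icc le_rfl hT₁t')).congr hEq).union_of_isClosed
      (contDiff_linearPath.continuous.continuousOn.congr eqOn_redirect_linearPath)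
      isClosed_Icc isClosed_Icc
  · have hw₁ := hpw.truncate (fun _ _ _ _ h hx _ hy => h.mono (Icc_subset_Icc hx hy)) hT₁ hT₁t'
    exact (hw₁.imp fun u v hu hv h => h.congr fun r hr => hEq ⟨hu.trans hr.1, hr.2.trans hv⟩).snoc
      hT (contDiff_linearPath.contDiffOn.congr eqOn_redirect_linearPath)

lemma integral_lagrangian_redirect (hc : IsSpeedFunction c) (hw : IsVPath t' x' w)
    (hT₁ : 0 < T₁) (hT₁t' : T₁ ≤ t') (hT : T₁ < T) :
    ∫ u in (0:ℝ)..T, lagrangian c (redirect w T₁ T x) u =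
      (∫ u in (0:ℝ)..T₁, lagrangian c w u) +
        ∫ u in T₁..T, lagrangian c (linearPath T₁ T (w T₁) x) u := by
  have hr := (hw.redirect (x := x) hT₁ hT₁t' hT).hasBoundedDerivOffCountable
  rw [← intervalIntegral.integral_add_adjacent_intervals
    ((hr.mono le_rfl hT.le).intervalIntegrable_lagrangian hc hT₁.le)
    ((hr.mono hT₁.le le_rfl).intervalIntegrable_lagrangian hc hT.le),
    integral_lagrangian_congr hT₁.le fun u hu => redirect_of_le hu.2.le,
    integral_lagrangian_congr hT.le (eqOn_redirect_linearPath.mono Ioo_subset_Icc_self)]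

end Redirect

lemma le_of_forall_mem_Ioo_le_add_mul {a b C ε₀ : ℝ} (hε₀ : 0 < ε₀)
    (h : ∀ δ ∈ Ioo 0 ε₀, a ≤ b + C * δ) : a ≤ b := by
  have hcont : Continuous fun δ : ℝ => b + C * δ := by fun_prop
  have hlim : Tendsto (fun δ : ℝ => b + C * δ) (𝓝[>] 0) (𝓝 b) := by
    simpa using (hcont.tendsto 0).mono_left nhdsWithin_le_nhds
  exact ge_of_tendsto hlim (eventually_of_mem (Ioo_mem_nhdsGT hε₀) h)

def pathValues (c v₀ : ℝ → ℝ) (x t : ℝ) : Set ℝ :=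
  {A | ∃ w, IsVPath t x w ∧ A = v₀ (w 0) - ∫ s in (0:ℝ)..t, lagrangian c w s}

section VariationalFormula

variable {c ρ₀ v₀ w : ℝ → ℝ} {x t : ℝ}

lemma vFun_of_pos (ht : 0 < t) :
    vFun c v₀ x t = sSup (pathValues c v₀ x t) := by
  rw [vFun, if_neg ht.not_ge]
  rfl

lemma isVPath_const (ht : 0 < t) (x : ℝ) : IsVPath t x fun _ => x :=
  isVPath_iff.2 ⟨continuousOn_const, rfl, (PiecewiseOn.refl 0).snoc ht contDiffOn_const⟩

lemma pathValues_nonempty (ht : 0 < t) : (pathValues c v₀ x t).Nonempty :=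
  ⟨_, _, isVPath_const ht x, rfl⟩

lemma IsVPath.value_le (hc : IsSpeedFunction c) (hρ : ∀ x, ρ₀ x ∈ Icc (0 : ℝ) 1)
    (hv₀ : IsV0For ρ₀ v₀) (hw : IsVPath t x w) (ht : 0 ≤ t) :
    v₀ (w 0) - ∫ s in (0:ℝ)..t, lagrangian c w s ≤ v₀ x := by
  have hcost := hw.hasBoundedDerivOffCountable.max_sub_le_integral_lagrangian hc ht
  rw [hw.2.1] at hcost
  linarith [hv₀.sub_le_max_zero_sub hρ (w 0) x]

lemma IsVPath.value_le_vFun (hc : IsSpeedFunction c) (hρ : ∀ x, ρ₀ x ∈ Icc (0 : ℝ) 1)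
    (hv₀ : IsV0For ρ₀ v₀) (hw : IsVPath t x w) (ht : 0 < t) :
    v₀ (w 0) - ∫ s in (0:ℝ)..t, lagrangian c w s ≤ vFun c v₀ x t := by
  rw [vFun_of_pos ht]
  exact le_csSup ⟨v₀ x, by rintro _ ⟨w', hw', rfl⟩; exact hw'.value_le hc hρ hv₀ ht.le⟩
    ⟨w, hw, rfl⟩

lemma IsVPath.value_le_vFun_add (hc : IsSpeedFunction c) (hρ : ∀ x, ρ₀ x ∈ Icc (0 : ℝ) 1)
    (hv₀ : IsV0For ρ₀ v₀) {t' x' T₁ T M : ℝ} (hw : IsVPath t' x' w) (hT₁ : 0 < T₁)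
    (hT₁t' : T₁ ≤ t') (hT : T₁ < T) (hM : ∀ y ∈ uIcc (w T₁) x, c y ≤ M) :
    v₀ (w 0) - ∫ s in (0:ℝ)..t', lagrangian c w s ≤
      vFun c v₀ x T + (max 0 (w T₁ - x) - max 0 (w T₁ - x') + M * (T - T₁) / 4) := by
  have hnew := (hw.redirect (x := x) hT₁ hT₁t' hT).value_le_vFun hc hρ hv₀ (hT₁.trans hT)
  rw [redirect_of_le hT₁.le, integral_lagrangian_redirect hc hw hT₁ hT₁t' hT] at hnew
  have hb := hw.hasBoundedDerivOffCountable
  have htail := (hb.mono hT₁.le le_rfl).max_sub_le_integral_lagrangian hc hT₁t'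
  rw [hw.2.1] at htail
  rw [← intervalIntegral.integral_add_adjacent_intervals
    ((hb.mono le_rfl hT₁t').intervalIntegrable_lagrangian hc hT₁.le)
    ((hb.mono hT₁.le le_rfl).intervalIntegrable_lagrangian hc hT₁t')]
  linarith [integral_lagrangian_linearPath_le hc hT hM]

lemma vFun_le_vFun_add_max (hc : IsSpeedFunction c) (hρ : ∀ x, ρ₀ x ∈ Icc (0 : ℝ) 1)
    (hv₀ : IsV0For ρ₀ v₀) {t' : ℝ} (ht : 0 < t) (htt' : t ≤ t') (x x' : ℝ) :
    vFun c v₀ x' t' ≤ vFun c v₀ x t + max 0 (x' - x) := by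
  rw [vFun_of_pos (ht.trans_le htt')]
  refine csSup_le (pathValues_nonempty (ht.trans_le htt')) ?_
  rintro _ ⟨w, hw, rfl⟩
  obtain ⟨B, hB⟩ := isCompact_Icc.exists_bound_of_continuousOn hw.1
  set R := max B |x|
  obtain ⟨M, hM⟩ := hc.bddAbove_image (isCompact_Icc (a := -R) (b := R))
  refine le_of_forall_mem_Ioo_le_add_mul (C := M / 4) ht fun δ hδ => ?_
  have hwδ : w (t - δ) ∈ Icc (-R) R :=
    abs_le.1 <| (Real.norm_eq_abs _ ▸ hB _ ⟨by linarith [hδ.2], by linarith [hδ.1]⟩).trans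
      (le_max_left _ _)
  have hx : x ∈ Icc (-R) R := abs_le.1 (le_max_right _ _)
  have hval := hw.value_le_vFun_add hc hρ hv₀ (sub_pos.2 hδ.2) (by linarith [hδ.1])
    (sub_lt_self t hδ.1) fun y hy => hM (mem_image_of_mem c (uIcc_subset_Icc hwδ hx hy))
  have htri : max 0 (w (t - δ) - x) ≤ max 0 (w (t - δ) - x') + max 0 (x' - x) :=
    max_le (by positivity)
      (by linarith [le_max_right 0 (w (t - δ) - x'), le_max_right 0 (x' - x)])
  linarith

lemma vFun_sub_mul_le_vFun (hc : IsSpeedFunction c) (hρ : ∀ x, ρ₀ x ∈ Icc (0 : ℝ) 1)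
    (hv₀ : IsV0For ρ₀ v₀) {t' : ℝ} (ht : 0 < t) (htt' : t < t') (x : ℝ) :
    vFun c v₀ x t - c x * (t' - t) / 4 ≤ vFun c v₀ x t' := by
  rw [sub_le_iff_le_add, vFun_of_pos ht]
  refine csSup_le (pathValues_nonempty ht) ?_
  rintro _ ⟨w, hw, rfl⟩
  have hval := hw.value_le_vFun_add hc hρ hv₀ ht le_rfl htt' (M := c x) fun y hy => by
    rw [hw.2.1, uIcc_self, mem_singleton_iff] at hy
    rw [hy]
  rw [hw.2.1, sub_self] at hval
  linarith

lemma abs_vFun_sub_vFun_space_le (hc : IsSpeedFunction c) (hρ : ∀ x, ρ₀ x ∈ Icc (0 : ℝ) 1)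
    (hv₀ : IsV0For ρ₀ v₀) (ht : 0 < t) (x x' : ℝ) :
    |vFun c v₀ x t - vFun c v₀ x' t| ≤ |x - x'| := by
  rw [abs_sub_le_iff]
  constructor
  · linarith [vFun_le_vFun_add_max hc hρ hv₀ ht le_rfl x' x,
      max_le (abs_nonneg (x - x')) (le_abs_self (x - x'))]
  · linarith [vFun_le_vFun_add_max hc hρ hv₀ ht le_rfl x x',
      max_le (abs_nonneg (x - x')) (abs_sub_comm x x' ▸ le_abs_self (x' - x))]

lemma abs_vFun_sub_vFun_time_le (hc : IsSpeedFunction c) (hρ : ∀ x, ρ₀ x ∈ Icc (0 : ℝ) 1)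
    (hv₀ : IsV0For ρ₀ v₀) {t' : ℝ} (ht : 0 < t) (ht' : 0 < t') (x : ℝ) :
    |vFun c v₀ x t - vFun c v₀ x t'| ≤ c x * |t - t'| / 4 := by
  wlog htt' : t ≤ t' generalizing t t'
  · rw [abs_sub_comm, abs_sub_comm t]
    exact this ht' ht (le_of_not_ge htt')
  rcases htt'.eq_or_lt with rfl | hlt
  · simp
  have hmono := vFun_le_vFun_add_max hc hρ hv₀ ht htt' x x
  have hlow := vFun_sub_mul_le_vFun hc hρ hv₀ ht hlt x
  rw [sub_self, max_self] at hmono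
  rw [abs_of_nonneg (by linarith), abs_of_nonpos (by linarith)]
  linarith

end VariationalFormula

theorem stmt10_general (c : ℝ → ℝ) (hc : IsSpeedFunction c)
    (ρ₀ v₀ : ℝ → ℝ) (hρ : ∀ x, ρ₀ x ∈ Icc (0 : ℝ) 1)
    (hv₀ : IsV0For ρ₀ v₀) :
    ∀ K : Set (ℝ × ℝ), IsCompact K → K ⊆ {p : ℝ × ℝ | 0 < p.2} →
      ∃ L : NNReal, LipschitzOnWith L (fun p : ℝ × ℝ => vFun c v₀ p.1 p.2) K := by
  intro K hK hKpos
  obtain ⟨C, hC⟩ := hc.bddAbove_image (hK.image continuous_fst)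
  refine ⟨(1 + C / 4).toNNReal, LipschitzOnWith.of_dist_le_mul fun p hp q hq => ?_⟩
  have hCq : c q.1 ≤ C := hC (mem_image_of_mem c (mem_image_of_mem Prod.fst hq))
  have hC₀ : 0 ≤ C := (hc.pos q.1).le.trans hCq
  have h₁ : |p.1 - q.1| ≤ dist p q := by
    rw [Prod.dist_eq, ← Real.dist_eq]; exact le_max_left _ _
  have h₂ : |p.2 - q.2| ≤ dist p q := by
    rw [Prod.dist_eq, ← Real.dist_eq]; exact le_max_right _ _
  calc dist (vFun c v₀ p.1 p.2) (vFun c v₀ q.1 q.2)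
      ≤ |vFun c v₀ p.1 p.2 - vFun c v₀ q.1 p.2| + |vFun c v₀ q.1 p.2 - vFun c v₀ q.1 q.2| :=
        abs_sub_le _ _ _
    _ ≤ |p.1 - q.1| + c q.1 * |p.2 - q.2| / 4 :=
        add_le_add (abs_vFun_sub_vFun_space_le hc hρ hv₀ (hKpos hp) _ _)
          (abs_vFun_sub_vFun_time_le hc hρ hv₀ (hKpos hp) (hKpos hq) _)
    _ ≤ dist p q + C * dist p q / 4 := by gcongr
    _ = (1 + C / 4) * dist p q := by ring
    _ ≤ (1 + C / 4).toNNReal * dist p q := by gcongr; exact Real.le_coe_toNNReal _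

/-- Theorem: the variational formula defines a function that is Lipschitz on every compact
subset of space-time. -/
theorem stmt10 (c : ℝ → ℝ) (hc : IsSpeedFunction c)
    (ρ₀ v₀ : ℝ → ℝ) (hρmeas : Measurable ρ₀) (hρ : ∀ x, ρ₀ x ∈ Icc (0 : ℝ) 1)
    (hv₀ : IsV0For ρ₀ v₀) :
    ∀ K : Set (ℝ × ℝ), IsCompact K → K ⊆ {p : ℝ × ℝ | 0 < p.2} →
      ∃ L : NNReal, LipschitzOnWith L (fun p : ℝ × ℝ => vFun c v₀ p.1 p.2) K :=
  stmt10_general c hc ρ₀ v₀ hρ hv₀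

end
end
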